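/- If X is a standard Cauchy random variable (density 1/(π(1+x²)) on ℝ), then the random variable (X² - 1)/(2X) is also standard Cauchy. -/
import Mathlib


open MeasureTheory Set Real

/-- A real random variable is standard Cauchy if its law has density
`x ↦ 1/(π(1+x²))` with respect to Lebesgue measure. -/
def IsStdCauchy {Ω : Type*} [MeasurableSpace Ω] (ℙ : Measure Ω) (X : Ω → ℝ) : Prop :=
  Measure.map X ℙ =
    volume.withDensity (fun x => ENNReal.ofReal (1 / (Real.pi * (1 + x ^ 2))))

noncomputable abbrev cauchyMeasure : Measure ℝ :=
  volume.withDensity (fun x => ENNReal.ofReal (1 / (Real.pi * (1 + x ^ 2))))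

lemma cauchy_dens_eq : (fun x : ℝ => 1 / (Real.pi * (1 + x ^ 2)))
    = fun x : ℝ => (1 / Real.pi) * (1 + x ^ 2)⁻¹ := by
  funext x
  have h : (1 : ℝ) + x ^ 2 ≠ 0 := by positivity
  field_simp

lemma cauchy_integrableOn (s : Set ℝ) :
    IntegrableOn (fun x : ℝ => 1 / (Real.pi * (1 + x ^ 2))) s := by
  rw [cauchy_dens_eq]
  exact ((integrable_inv_one_add_sq).const_mul (1 / Real.pi)).integrableOn

lemma cauchy_meas (s : Set ℝ) (hs : MeasurableSet s) :
    cauchyMeasure s = ENNReal.ofReal ((1 / Real.pi) * ∫ x in s, (1 + x ^ 2)⁻¹) := by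
  rw [withDensity_apply _ hs,
    ← ofReal_integral_eq_lintegral_ofReal (cauchy_integrableOn s)
      (Filter.Eventually.of_forall fun x => by positivity)]
  congr 1
  rw [cauchy_dens_eq, integral_const_mul]

lemma cauchy_meas_Iic (t : ℝ) :
    cauchyMeasure (Iic t) = ENNReal.ofReal ((1 / Real.pi) * (arctan t + π / 2)) := by
  rw [cauchy_meas _ measurableSet_Iic, integral_Iic_inv_one_add_sq]

lemma cauchy_meas_Ioc {a b : ℝ} (hab : a ≤ b) :
    cauchyMeasure (Ioc a b) = ENNReal.ofReal ((1 / Real.pi) * (arctan b - arctan a)) := by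
  rw [cauchy_meas _ measurableSet_Ioc, ← intervalIntegral.integral_of_le hab,
    integral_inv_one_add_sq]

lemma cauchy_key (y : ℝ) :
    cauchyMeasure ((fun x : ℝ => (x ^ 2 - 1) / (2 * x)) ⁻¹' Iic y) = cauchyMeasure (Iic y) := by
  set s := Real.sqrt (y ^ 2 + 1) with hs_def
  have hs2 : s ^ 2 = y ^ 2 + 1 := Real.sq_sqrt (by positivity)
  have hys : |y| < s := by
    nlinarith [abs_nonneg y, Real.sqrt_nonneg (y ^ 2 + 1), sq_abs y]
  have hx2 : y - s < 0 := by
    have := abs_lt.mp hys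
    linarith [this.2]
  have hx1 : 0 < y + s := by
    have := abs_lt.mp hys
    linarith [this.1]
  have h0 : cauchyMeasure ({0} : Set ℝ) = 0 :=
    withDensity_absolutelyContinuous _ _ Real.volume_singleton
  have hset : (fun x : ℝ => (x ^ 2 - 1) / (2 * x)) ⁻¹' Iic y \ {0}
      = Iic (y - s) ∪ Ioc 0 (y + s) := by
    ext x
    simp only [mem_diff, mem_preimage, mem_Iic, mem_singleton_iff, mem_union, mem_Ioc]
    constructor
    · rintro ⟨hle, hx0⟩
      rcases lt_or_gt_of_ne hx0 with hneg | hpos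
      · left
        have h2x : 2 * x < 0 := by linarith
        rw [div_le_iff_of_neg h2x] at hle
        nlinarith
      · right
        refine ⟨hpos, ?_⟩
        have h2x : 0 < 2 * x := by linarith
        rw [div_le_iff₀ h2x] at hle
        nlinarith
    · rintro (hle | ⟨hpos, hle⟩)
      · have hxneg : x < 0 := lt_of_le_of_lt hle hx2
        have h2x : 2 * x < 0 := by linarith
        refine ⟨?_, ne_of_lt hxneg⟩
        rw [div_le_iff_of_neg h2x]
        nlinarith
      · have h2x : 0 < 2 * x := by linarith
        refine ⟨?_, ne_of_gt hpos⟩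
        rw [div_le_iff₀ h2x]
        nlinarith
  have hmeq : cauchyMeasure ((fun x : ℝ => (x ^ 2 - 1) / (2 * x)) ⁻¹' Iic y)
      = cauchyMeasure (Iic (y - s) ∪ Ioc 0 (y + s)) := by
    rw [← hset, measure_diff_null h0]
  rw [hmeq, measure_union (by
      refine Set.disjoint_left.mpr fun x hx hx' => ?_
      simp only [mem_Iic] at hx
      simp only [mem_Ioc] at hx'
      linarith [hx'.1]) measurableSet_Ioc,
    cauchy_meas_Iic, cauchy_meas_Ioc hx1.le, cauchy_meas_Iic, arctan_zero, sub_zero]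
  have harctan : arctan (y - s) + arctan (y + s) = arctan y := by
    have hprod : (y - s) * (y + s) < 1 := by nlinarith
    rw [Real.arctan_add hprod]
    congr 1
    have : 1 - (y - s) * (y + s) = 2 := by nlinarith
    rw [this]
    ring
  rw [← ENNReal.ofReal_add, ← mul_add]
  · congr 2
    linarith
  · have h1 := Real.neg_pi_div_two_lt_arctan (y - s)
    have h2 := Real.pi_pos
    exact mul_nonneg (by positivity) (by linarith)
  · have h1 : (0 : ℝ) ≤ arctan (y + s) := by
      rw [← Real.arctan_zero]
      exact Real.arctan_strictMono.monotone hx1.le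
    have h2 := Real.pi_pos
    exact mul_nonneg (by positivity) (by linarith)

theorem cauchy_invariance {Ω : Type*} [MeasurableSpace Ω] (ℙ : Measure Ω)
    [IsProbabilityMeasure ℙ] (X : Ω → ℝ) (hX : Measurable X)
    (hC : IsStdCauchy ℙ X) :
    IsStdCauchy ℙ (fun ω => (X ω ^ 2 - 1) / (2 * X ω)) := by
  have hf : Measurable (fun x : ℝ => (x ^ 2 - 1) / (2 * x)) := by
    exact ((measurable_id.pow_const 2).sub measurable_const).div
      (measurable_const.mul measurable_id)
  unfold IsStdCauchy at hC ⊢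
  have hcomp : (fun ω => (X ω ^ 2 - 1) / (2 * X ω))
      = (fun x : ℝ => (x ^ 2 - 1) / (2 * x)) ∘ X := rfl
  rw [hcomp, ← Measure.map_map hf hX, hC]
  haveI h1 : IsProbabilityMeasure
      (volume.withDensity (fun x : ℝ => ENNReal.ofReal (1 / (Real.pi * (1 + x ^ 2))))) :=
    hC ▸ Measure.isProbabilityMeasure_map hX.aemeasurable
  haveI : IsProbabilityMeasure (Measure.map (fun x : ℝ => (x ^ 2 - 1) / (2 * x))
      (volume.withDensity (fun x : ℝ => ENNReal.ofReal (1 / (Real.pi * (1 + x ^ 2)))))) :=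
    Measure.isProbabilityMeasure_map hf.aemeasurable
  refine Measure.ext_of_Iic _ _ (fun y => ?_)
  rw [Measure.map_apply hf measurableSet_Iic]
  exact cauchy_key y
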